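/- arXiv:1601.02415 — 7 statements merged into one kernel-verified Lean document; each statement's English description precedes it below -/
import Mathlib

section
/- Let (X,W) be a good pair with W nonempty. Then mspd_k(X,W) equals the minimum over all sets Y ⊆ X ∪ W with Y ≠ X, |Y| ≤ k+1, and W ∩ N(X \ Y) = ∅ of 1 + mspd_k(Y, W \ Y). Moreover, if |X| ≤ k+1 then mspd_k(X, ∅) = 1. -/
variable {V : Type*}

/-- The neighborhood of a set `S`: vertices outside `S` adjacent to some vertex of `S`. -/
def neighborhood (G : SimpleGraph V) (S : Set V) : Set V :=
  {v | v ∉ S ∧ ∃ u ∈ S, G.Adj u v}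

/-- `bags : Fin s → Finset V` is a path decomposition of the subgraph of `G` induced on `S`:
the bags lie in `S`, cover all vertices of `S` and all edges of `G` inside `S`, and every
vertex occurs in a contiguous interval of bags. -/
def IsPathDecomp (G : SimpleGraph V) (S : Set V) {s : ℕ} (bags : Fin s → Finset V) : Prop :=
  (∀ i, ↑(bags i) ⊆ S) ∧
  (∀ v ∈ S, ∃ i, v ∈ bags i) ∧
  (∀ v ∈ S, ∀ w ∈ S, G.Adj v w → ∃ i, v ∈ bags i ∧ w ∈ bags i) ∧
  (∀ (v : V) (i j l : Fin s), i ≤ j → j ≤ l → v ∈ bags i → v ∈ bags l → v ∈ bags j)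

/-- `(X, W)` is a good pair: `|X| ≤ k+1`, `X` and `W` are disjoint, and every vertex of `W`
has all its neighbors in `W ∪ X`. -/
def GoodPair [DecidableEq V] (G : SimpleGraph V) (k : ℕ) (X W : Finset V) : Prop :=
  X.card ≤ k + 1 ∧ Disjoint X W ∧ ∀ v ∈ W, ∀ u, G.Adj v u → u ∈ W ∪ X
/-- The minimum size (as an extended natural, `⊤` if none exists) of a path decomposition of
`G[X ∪ W]` of width at most `k` whose last bag is exactly `X`. -/
noncomputable def mspd [DecidableEq V] (G : SimpleGraph V) (k : ℕ) (X W : Finset V) : ℕ∞ :=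
  sInf {m : ℕ∞ | ∃ (s : ℕ) (bags : Fin s → Finset V), m = s ∧
    IsPathDecomp G ↑(X ∪ W) bags ∧ (∀ i, (bags i).card ≤ k + 1) ∧
    ∃ h : 0 < s, bags ⟨s - 1, Nat.sub_lt h Nat.one_pos⟩ = X}

/-!
Appending the bag `X` to a decomposition of `G[Y ∪ W]` that ends in `Y` is again a path
decomposition, because the only new edges, those between `X \ Y` and `W`, do not exist; this gives
`mspd_k(X, W) ≤ 1 + mspd_k(Y, W \ Y)`. Conversely, in a decomposition of `G[X ∪ W]` ending in `X`
let `Y` be the penultimate bag. If `Y = X` the last bag can be dropped. Otherwise the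
decomposition without its last bag ends in `Y`, and an edge from `u ∈ X \ Y` to `W` would be
covered by an earlier bag, so that by contiguity `u ∈ Y`.
-/

theorem inter_neighborhood_eq_empty_iff {G : SimpleGraph V} {S T : Set V} :
    T ∩ neighborhood G S = ∅ ↔ ∀ u ∈ S, ∀ v ∈ T, v ∉ S → ¬ G.Adj u v := by
  simp only [Set.eq_empty_iff_forall_notMem, neighborhood, Set.mem_inter_iff, Set.mem_ofPred_eq]
  exact ⟨fun h u hu v hv hvS huv => h v ⟨hv, hvS, u, hu, huv⟩,
    fun h v ⟨hv, hvS, u, hu, huv⟩ => h u hu v hv hvS huv⟩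

namespace IsPathDecomp

variable {G : SimpleGraph V} {S : Set V} {n : ℕ}

theorem const (S : Finset V) : IsPathDecomp G ↑S (fun _ : Fin (n + 1) => S) :=
  ⟨fun _ => le_rfl, fun _ hv => ⟨0, hv⟩, fun _ hv _ hw _ => ⟨0, hv, hw⟩,
    fun _ _ _ _ _ _ hv _ => hv⟩

theorem mem_penultimate {bags : Fin (n + 2) → Finset V} (h : IsPathDecomp G S bags) {v : V}
    {i : Fin (n + 1)} (hi : v ∈ bags i.castSucc) (hlast : v ∈ bags (Fin.last (n + 1))) :
    v ∈ bags (Fin.last n).castSucc :=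
  h.2.2.2 v _ _ _ (Fin.castSucc_le_castSucc_iff.2 (Fin.le_last i))
    (Fin.castSucc_lt_last _).le hi hlast

theorem init {bags : Fin (n + 2) → Finset V} (h : IsPathDecomp G S bags) :
    IsPathDecomp G (S \ ↑(bags (Fin.last (n + 1))) ∪ ↑(bags (Fin.last n).castSucc))
      (Fin.init bags) := by
  refine ⟨fun i v hv => ?_, fun v hv => ?_, fun v hv w hw hvw => ?_,
    fun v i j l hij hjl => h.2.2.2 v _ _ _ hij hjl⟩
  · by_cases hL : v ∈ bags (Fin.last (n + 1))
    · exact Or.inr (h.mem_penultimate hv hL)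
    · exact Or.inl ⟨h.1 _ hv, hL⟩
  · rcases hv with ⟨hvS, hvL⟩ | hvY
    · obtain ⟨i, hi⟩ := h.2.1 v hvS
      induction i using Fin.lastCases with
      | last => exact absurd hi hvL
      | cast i => exact ⟨i, hi⟩
    · exact ⟨Fin.last n, hvY⟩
  · obtain ⟨i, hvi, hwi⟩ :=
      h.2.2.1 v (hv.elim (·.1) (h.1 _ ·)) w (hw.elim (·.1) (h.1 _ ·)) hvw
    induction i using Fin.lastCases with
    | last => exact ⟨Fin.last n, hv.resolve_left (·.2 hvi), hw.resolve_left (·.2 hwi)⟩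
    | cast i => exact ⟨i, hvi, hwi⟩

theorem snoc {bags : Fin (n + 1) → Finset V} (h : IsPathDecomp G S bags) {X : Finset V}
    (hXS : ↑X ∩ S ⊆ ↑(bags (Fin.last n)))
    (hedge : ∀ u ∈ X, u ∉ S → ∀ v ∈ S, G.Adj u v → v ∈ X) :
    IsPathDecomp G (S ∪ ↑X) (Fin.snoc (α := fun _ => Finset V) bags X) := by
  refine ⟨fun i => ?_, fun v hv => ?_, fun v hv w hw hvw => ?_, fun v i j l hij hjl => ?_⟩
  · induction i using Fin.lastCases with
    | last => simp only [Fin.snoc_last]; exact Set.subset_union_right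
    | cast i => simp only [Fin.snoc_castSucc]; exact (h.1 i).trans Set.subset_union_left
  · rcases hv with hvS | hvX
    · obtain ⟨i, hi⟩ := h.2.1 v hvS
      exact ⟨i.castSucc, by simpa only [Fin.snoc_castSucc]⟩
    · exact ⟨Fin.last (n + 1), by simpa only [Fin.snoc_last]⟩
  · have hX : ∀ u ∈ S ∪ ↑X, ∀ u' ∈ S ∪ ↑X, u ∉ S → G.Adj u u' → u ∈ X ∧ u' ∈ X := by
      intro u hu u' hu' huS huu'
      have huX : u ∈ X := hu.resolve_left huS
      exact ⟨huX, hu'.elim (hedge u huX huS u' · huu') id⟩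
    by_cases hvS : v ∈ S
    · by_cases hwS : w ∈ S
      · obtain ⟨i, hvi, hwi⟩ := h.2.2.1 v hvS w hwS hvw
        exact ⟨i.castSucc, by simpa only [Fin.snoc_castSucc] using And.intro hvi hwi⟩
      · obtain ⟨hwX, hvX⟩ := hX w hw v hv hwS hvw.symm
        exact ⟨Fin.last (n + 1), by simpa only [Fin.snoc_last] using And.intro hvX hwX⟩
    · obtain ⟨hvX, hwX⟩ := hX v hv w hw hvS hvw
      exact ⟨Fin.last (n + 1), by simpa only [Fin.snoc_last] using And.intro hvX hwX⟩
  · induction l using Fin.lastCases with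
    | cast l =>
      induction j using Fin.lastCases with
      | last => exact absurd hjl (Fin.castSucc_lt_last l).not_ge
      | cast j =>
        induction i using Fin.lastCases with
        | last => exact absurd hij (Fin.castSucc_lt_last j).not_ge
        | cast i =>
          simp only [Fin.snoc_castSucc]
          exact h.2.2.2 v i j l hij hjl
    | last =>
      induction j using Fin.lastCases with
      | last => exact fun _ hv => hv
      | cast j =>
        induction i using Fin.lastCases with
        | last => exact absurd hij (Fin.castSucc_lt_last j).not_ge
        | cast i =>
          simp only [Fin.snoc_castSucc, Fin.snoc_last]
          intro hvi hvX
          exact h.2.2.2 v i j (Fin.last n) hij (Fin.le_last j) hvi (hXS ⟨hvX, h.1 i hvi⟩)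

end IsPathDecomp

section mspd

variable [DecidableEq V]

def mspdStepValues (G : SimpleGraph V) (k : ℕ) (X W : Finset V) : Set ℕ∞ :=
  {m | ∃ Y : Finset V, Y ⊆ X ∪ W ∧ Y ≠ X ∧ Y.card ≤ k + 1 ∧
    (↑W : Set V) ∩ neighborhood G ↑(X \ Y) = ∅ ∧ m = 1 + mspd G k Y (W \ Y)}

variable {G : SimpleGraph V} {k : ℕ} {X W : Finset V}

theorem mspd_le_of_isPathDecomp {n : ℕ} {bags : Fin (n + 1) → Finset V}
    (hpd : IsPathDecomp G ↑(X ∪ W) bags) (hwidth : ∀ i, (bags i).card ≤ k + 1)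
    (hlast : bags (Fin.last n) = X) : mspd G k X W ≤ n + 1 :=
  sInf_le ⟨n + 1, bags, by norm_cast, hpd, hwidth, n.succ_pos, hlast⟩

theorem le_mspd {m : ℕ∞} (h : ∀ (n : ℕ) (bags : Fin (n + 1) → Finset V),
      IsPathDecomp G ↑(X ∪ W) bags → (∀ i, (bags i).card ≤ k + 1) → bags (Fin.last n) = X →
      m ≤ n + 1) :
    m ≤ mspd G k X W := by
  refine le_sInf ?_
  rintro _ ⟨s, bags, rfl, hpd, hwidth, hs, hlast⟩
  obtain ⟨n, rfl⟩ := Nat.exists_eq_succ_of_ne_zero hs.ne'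
  exact_mod_cast h n bags hpd hwidth hlast

theorem exists_isPathDecomp_of_mspd_ne_top (h : mspd G k X W ≠ ⊤) :
    ∃ (n : ℕ) (bags : Fin (n + 1) → Finset V), IsPathDecomp G ↑(X ∪ W) bags ∧
      (∀ i, (bags i).card ≤ k + 1) ∧ bags (Fin.last n) = X ∧ mspd G k X W = n + 1 := by
  unfold mspd at h ⊢
  obtain ⟨s, bags, hs_eq, hpd, hwidth, hs, hlast⟩ :=
    csInf_mem (Set.nonempty_iff_ne_empty.2 (ne_of_apply_ne sInf (h.trans_eq sInf_empty.symm)))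
  obtain ⟨n, rfl⟩ := Nat.exists_eq_succ_of_ne_zero hs.ne'
  exact ⟨n, bags, hpd, hwidth, hlast, by exact_mod_cast hs_eq⟩

theorem mspd_le_one_add_mspd {Y : Finset V} (hX : X.card ≤ k + 1) (hXW : Disjoint X W)
    (hYXW : Y ⊆ X ∪ W) (hN : (↑W : Set V) ∩ neighborhood G ↑(X \ Y) = ∅) :
    mspd G k X W ≤ 1 + mspd G k Y (W \ Y) := by
  by_cases htop : mspd G k Y (W \ Y) = ⊤
  · simp [htop]
  obtain ⟨n, bags, hpd, hwidth, hlast, hmspd⟩ := exists_isPathDecomp_of_mspd_ne_top htop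
  rw [Finset.union_sdiff_self_eq_union] at hpd
  have hXS : ↑X ∩ ↑(Y ∪ W) ⊆ (↑(bags (Fin.last n)) : Set V) := by
    rintro v ⟨hvX, hv⟩
    rw [hlast]
    exact (Finset.mem_union.1 hv).resolve_right (Finset.disjoint_left.1 hXW hvX)
  have hXedge : ∀ u ∈ X, u ∉ (↑(Y ∪ W) : Set V) → ∀ v ∈ (↑(Y ∪ W) : Set V), G.Adj u v → v ∈ X := by
    intro u hu huYW v hv huv
    by_contra hvX
    have hvW : v ∈ W := (Finset.mem_union.1 hv).elim
      (fun hvY => (Finset.mem_union.1 (hYXW hvY)).resolve_left hvX) id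
    have huY : u ∉ Y := fun huY => huYW (by simp [huY])
    exact inter_neighborhood_eq_empty_iff.1 hN u (by simp [hu, huY]) v hvW (by simp [hvX]) huv
  have hS : (↑(Y ∪ W) : Set V) ∪ ↑X = ↑(X ∪ W) := by
    rw [← Finset.coe_union, Finset.union_comm, ← Finset.union_assoc, Finset.union_right_comm,
      Finset.union_eq_left.2 hYXW]
  have hpd' := hpd.snoc hXS hXedge
  rw [hS] at hpd'
  calc mspd G k X W ≤ ↑(n + 1) + 1 :=
        mspd_le_of_isPathDecomp hpd' (Fin.lastCases (by simpa) (by simpa)) (by simp)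
    _ = 1 + mspd G k Y (W \ Y) := by rw [hmspd]; push_cast; ring

theorem sInf_mspdStepValues_le (hXW : Disjoint X W) (hW : W.Nonempty) (n : ℕ)
    (bags : Fin (n + 1) → Finset V) (hpd : IsPathDecomp G ↑(X ∪ W) bags)
    (hwidth : ∀ i, (bags i).card ≤ k + 1) (hlast : bags (Fin.last n) = X) :
    sInf (mspdStepValues G k X W) ≤ n + 1 := by
  induction n with
  | zero =>
    obtain ⟨w, hw⟩ := hW
    obtain ⟨i, hi⟩ := hpd.2.1 w (by simp [hw])
    rw [show i = Fin.last 0 from Fin.ext (Nat.lt_one_iff.1 i.isLt), hlast] at hi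
    exact absurd hw (Finset.disjoint_left.1 hXW hi)
  | succ n ih =>
    set Y := bags (Fin.last n).castSucc
    have hinit : IsPathDecomp G ↑(Y ∪ W) (Fin.init bags) := by
      convert hpd.init using 1
      rw [hlast, ← Finset.coe_sdiff, Finset.union_sdiff_cancel_left hXW, ← Finset.coe_union,
        Finset.union_comm]
    by_cases hYX : Y = X
    · calc sInf (mspdStepValues G k X W) ≤ n + 1 :=
            ih (Fin.init bags) (hYX ▸ hinit) (fun i => hwidth _) hYX
        _ ≤ ↑(n + 1) + 1 := by norm_cast; omega
    have hYXW : Y ⊆ X ∪ W := Finset.coe_subset.1 (hpd.1 _)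
    have hN : (↑W : Set V) ∩ neighborhood G ↑(X \ Y) = ∅ := by
      refine inter_neighborhood_eq_empty_iff.2 fun u hu v hvW _ huv => ?_
      rw [Finset.coe_sdiff, Set.mem_sdiff, Finset.mem_coe, Finset.mem_coe] at hu
      obtain ⟨i, hui, hvi⟩ := hpd.2.2.1 u (by simp [hu.1]) v (by simp [hvW]) huv
      induction i using Fin.lastCases with
      | last => exact Finset.disjoint_left.1 hXW (hlast ▸ hvi) hvW
      | cast i => exact hu.2 (hpd.mem_penultimate hui (hlast ▸ hu.1))
    rw [← Finset.union_sdiff_self_eq_union] at hinit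
    calc sInf (mspdStepValues G k X W) ≤ 1 + mspd G k Y (W \ Y) :=
          sInf_le ⟨Y, hYXW, hYX, hwidth _, hN, rfl⟩
      _ ≤ 1 + (n + 1) := by
          gcongr
          exact mspd_le_of_isPathDecomp hinit (fun _ => hwidth _) rfl
      _ = ↑(n + 1) + 1 := by push_cast; ring

end mspd

/-- The recurrence for `mspd`: for a good pair `(X, W)` with `W` nonempty, `mspd_k(X, W)` is
the minimum over all `Y ⊆ X ∪ W` with `Y ≠ X`, `|Y| ≤ k+1` and `W ∩ N(X \ Y) = ∅` of
`1 + mspd_k(Y, W \ Y)`; moreover `mspd_k(X', ∅) = 1` whenever `|X'| ≤ k+1`. -/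
theorem mspd_recurrence [DecidableEq V] (G : SimpleGraph V) (k : ℕ) (X W : Finset V)
    (hgp : GoodPair G k X W) (hW : W ≠ ∅) :
    mspd G k X W = sInf {m : ℕ∞ | ∃ Y : Finset V, Y ⊆ X ∪ W ∧ Y ≠ X ∧ Y.card ≤ k + 1 ∧
        (↑W : Set V) ∩ neighborhood G ↑(X \ Y) = ∅ ∧ m = 1 + mspd G k Y (W \ Y)} ∧
    ∀ X' : Finset V, X'.card ≤ k + 1 → mspd G k X' ∅ = 1 := by
  obtain ⟨hX, hXW, -⟩ := hgp
  refine ⟨le_antisymm ?_ ?_, fun X' hX' => le_antisymm ?_ ?_⟩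
  · refine le_sInf ?_
    rintro _ ⟨Y, hYXW, -, -, hN, rfl⟩
    exact mspd_le_one_add_mspd hX hXW hYXW hN
  · exact le_mspd (sInf_mspdStepValues_le hXW (Finset.nonempty_iff_ne_empty.2 hW))
  · refine mspd_le_of_isPathDecomp (n := 0) (bags := fun _ => X') ?_ (fun _ => hX') rfl
    rw [Finset.union_empty]
    exact .const X'
  · exact le_mspd fun n _ _ _ _ => le_add_self
end

section
/- Let (X,W) be a good pair with W nonempty, and suppose Y ⊆ X ∪ W satisfies W ∩ N(X \ Y) = ∅. If (X_1,...,X_s) is a path decomposition of G[Y ∪ W] of width at most k with last bag X_s = Y, then (X_1,...,X_s,X) is a path decomposition of G[X ∪ W] of width at most k with last bag X. -/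
variable {V : Type*}

/-- Appending the bag `X` to a path decomposition of `G[Y ∪ W]` of width at most `k` with last
bag `Y` yields a path decomposition of `G[X ∪ W]` of width at most `k` with last bag `X`,
provided `(X, W)` is a good pair and `W ∩ N(X \ Y) = ∅`. -/
theorem append_bag_path_decomposition [DecidableEq V] (G : SimpleGraph V) (k : ℕ)
    (X W Y : Finset V) (hgp : GoodPair G k X W) (hW : W ≠ ∅) (hYsub : Y ⊆ X ∪ W)
    (hN : (↑W : Set V) ∩ neighborhood G ↑(X \ Y) = ∅)
    {s : ℕ} (bags : Fin s → Finset V)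
    (hpd : IsPathDecomp G ↑(Y ∪ W) bags)
    (hwidth : ∀ i, (bags i).card ≤ k + 1)
    (hs : 0 < s) (hlast : bags ⟨s - 1, Nat.sub_lt hs Nat.one_pos⟩ = Y) :
    IsPathDecomp G ↑(X ∪ W) (Fin.snoc bags X) ∧
    (∀ i : Fin (s + 1), ((Fin.snoc bags X : Fin (s + 1) → Finset V) i).card ≤ k + 1) ∧
    (Fin.snoc bags X : Fin (s + 1) → Finset V) (Fin.last s) = X := by

  obtain ⟨hcard, hdisj, hclosed⟩ := hgp
  obtain ⟨hsub, hcov, hedge, hconn⟩ := hpd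
  -- key: an X-vertex adjacent to a W-vertex lies in Y
  have hkey : ∀ v ∈ X, ∀ w ∈ W, G.Adj v w → v ∈ Y := by
    intro v hv w hw hadj
    by_contra hvY
    have hwX : w ∉ X := fun h => (Finset.disjoint_left.mp hdisj h) hw
    have : w ∈ (↑W : Set V) ∩ neighborhood G ↑(X \ Y) := by
      refine ⟨hw, ?_, v, ?_, hadj⟩
      · simp only [Finset.coe_sdiff, Set.mem_diff, Finset.mem_coe]
        tauto
      · simp only [Finset.coe_sdiff, Set.mem_diff, Finset.mem_coe]
        exact ⟨hv, hvY⟩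
    rw [hN] at this
    exact this
  have hXnW : ∀ v ∈ X, v ∉ W := fun v hv => Finset.disjoint_left.mp hdisj hv
  have hcastYW : ∀ v ∈ X ∪ W, v ∈ W ∨ v ∈ X := by
    intro v hv
    rcases Finset.mem_union.mp hv with h | h
    · exact Or.inr h
    · exact Or.inl h
  refine ⟨⟨?_, ?_, ?_, ?_⟩, ?_, ?_⟩
  · -- bags lie in X ∪ W
    intro i
    refine Fin.lastCases ?_ ?_ i
    · rw [Fin.snoc_last]
      intro v hv
      exact Finset.mem_union_left _ hv
    · intro j
      rw [Fin.snoc_castSucc]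
      intro v hv
      have hv' := hsub j hv
      rcases Finset.mem_union.mp hv' with h | h
      · exact hYsub h
      · exact Finset.mem_union_right _ h
  · -- vertex coverage
    intro v hv
    rcases Finset.mem_union.mp hv with h | h
    · exact ⟨Fin.last s, by rw [Fin.snoc_last]; exact h⟩
    · obtain ⟨i, hi⟩ := hcov v (Finset.mem_union_right _ h)
      exact ⟨i.castSucc, by rw [Fin.snoc_castSucc]; exact hi⟩
  · -- edge coverage
    intro v hv w hw hadj
    have hv' := hcastYW v hv
    have hw' := hcastYW w hw
    rcases hv' with hvW | hvX
    · rcases hw' with hwW | hwX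
      · obtain ⟨i, hi1, hi2⟩ := hedge v (Finset.mem_union_right _ hvW) w
          (Finset.mem_union_right _ hwW) hadj
        exact ⟨i.castSucc, by rw [Fin.snoc_castSucc]; exact hi1,
          by rw [Fin.snoc_castSucc]; exact hi2⟩
      · have hvY := hkey w hwX v hvW hadj.symm
        obtain ⟨i, hi1, hi2⟩ := hedge v (Finset.mem_union_right _ hvW) w
          (Finset.mem_union_left _ hvY) hadj
        exact ⟨i.castSucc, by rw [Fin.snoc_castSucc]; exact hi1,
          by rw [Fin.snoc_castSucc]; exact hi2⟩
    · rcases hw' with hwW | hwX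
      · have hvY := hkey v hvX w hwW hadj
        obtain ⟨i, hi1, hi2⟩ := hedge v (Finset.mem_union_left _ hvY) w
          (Finset.mem_union_right _ hwW) hadj
        exact ⟨i.castSucc, by rw [Fin.snoc_castSucc]; exact hi1,
          by rw [Fin.snoc_castSucc]; exact hi2⟩
      · exact ⟨Fin.last s, by rw [Fin.snoc_last]; exact hvX,
          by rw [Fin.snoc_last]; exact hwX⟩
  · -- contiguity
    intro v i j l hij hjl hvi hvl
    by_cases hjlt : (j : ℕ) < s
    · -- j is not the last bag
      have hilt : (i : ℕ) < s := lt_of_le_of_lt hij hjlt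
      have hi' : i = Fin.castSucc ⟨(i : ℕ), hilt⟩ := Fin.ext rfl
      have hj' : j = Fin.castSucc ⟨(j : ℕ), hjlt⟩ := Fin.ext rfl
      rw [hi', Fin.snoc_castSucc] at hvi
      rw [hj', Fin.snoc_castSucc]
      by_cases hllt : (l : ℕ) < s
      · have hl' : l = Fin.castSucc ⟨(l : ℕ), hllt⟩ := Fin.ext rfl
        rw [hl', Fin.snoc_castSucc] at hvl
        exact hconn v _ _ _ hij hjl hvi hvl
      · -- l is the last bag, so v ∈ X, hence v ∈ Y = bags (s-1)
        have hl' : l = Fin.last s := Fin.ext (Nat.le_antisymm (Fin.is_le l) (not_lt.mp hllt))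
        rw [hl', Fin.snoc_last] at hvl
        have hvYW := hsub _ hvi
        have hvY : v ∈ Y := by
          rcases Finset.mem_union.mp hvYW with h | h
          · exact h
          · exact absurd h (hXnW v hvl)
        have hlastmem : v ∈ bags ⟨s - 1, Nat.sub_lt hs Nat.one_pos⟩ := by
          rw [hlast]; exact hvY
        refine hconn v _ _ _ hij ?_ hvi hlastmem
        exact Nat.le_sub_one_of_lt hjlt
    · -- j is the last bag, hence so is l
      have hj' : j = Fin.last s := Fin.ext (Nat.le_antisymm (Fin.is_le j) (not_lt.mp hjlt))
      have hl' : l = Fin.last s := Fin.ext (Nat.le_antisymm (Fin.is_le l)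
        (le_trans (not_lt.mp hjlt) hjl))
      rw [hj', Fin.snoc_last]
      rw [hl', Fin.snoc_last] at hvl
      exact hvl
  · -- width
    intro i
    refine Fin.lastCases ?_ ?_ i
    · rw [Fin.snoc_last]; exact hcard
    · intro j; rw [Fin.snoc_castSucc]; exact hwidth j
  · rw [Fin.snoc_last]
end

section
/- In the branch case of a minimum-size rooted tree decomposition of G[X ∪ W] with root bag X, the set W_1 of vertices of W appearing in the subtree of the first child of the root is a union of connected components of G[W]; that is, N(W_1) ⊆ W_1 ∪ X. -/
variable {V : Type*}

/-- A rooted tree decomposition of the subgraph of `G` induced on `S`, with tree structure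
given by a parent function on `Fin s` (the root is its own parent, and every node reaches the
root by iterating `parent`).  The bags lie in `S`, cover all vertices of `S` and all edges of
`G` inside `S`, and for each vertex `v` there is a topmost node `t` such that from any node
whose bag contains `v`, the ancestor chain up to `t` consists of bags containing `v`
(the subtree/connectivity condition). -/
def IsRootedTreeDecomp (G : SimpleGraph V) (S : Set V) {s : ℕ}
    (parent : Fin s → Fin s) (root : Fin s) (bags : Fin s → Finset V) : Prop :=
  parent root = root ∧
  (∀ i, ∃ n, parent^[n] i = root) ∧
  (∀ i, ↑(bags i) ⊆ S) ∧
  (∀ v ∈ S, ∃ i, v ∈ bags i) ∧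
  (∀ v ∈ S, ∀ w ∈ S, G.Adj v w → ∃ i, v ∈ bags i ∧ w ∈ bags i) ∧
  (∀ v : V, (∃ i, v ∈ bags i) →
    ∃ t, ∀ i, v ∈ bags i → ∃ n, parent^[n] i = t ∧ ∀ m ≤ n, v ∈ bags (parent^[m] i))

/-- The children of node `i` in the rooted tree given by `parent`. -/
def children {s : ℕ} (parent : Fin s → Fin s) (i : Fin s) : Set (Fin s) :=
  {j | parent j = i ∧ j ≠ i}

/-- In a rooted tree decomposition of `G[X ∪ W]` with root bag `X` whose root has at least two
children, the set `W₁` of vertices of `W` appearing in bags of the subtree rooted at a fixed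
child `c` is a union of connected components of `G[W]`; that is, `N(W₁) ⊆ W₁ ∪ X`. -/
theorem branch_set_is_component_union [DecidableEq V] (G : SimpleGraph V) (k : ℕ)
    (X W : Finset V) (hgp : GoodPair G k X W)
    {s : ℕ} (parent : Fin s → Fin s) (root : Fin s) (bags : Fin s → Finset V)
    (htd : IsRootedTreeDecomp G ↑(X ∪ W) parent root bags)
    (hroot : bags root = X)
    (c : Fin s) (hc : c ∈ children parent root)
    (c' : Fin s) (hc' : c' ∈ children parent root) (hne : c ≠ c') :
    neighborhood G {v | v ∈ W ∧ ∃ i : Fin s, (∃ n, parent^[n] i = c) ∧ v ∈ bags i}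
      ⊆ {v | v ∈ W ∧ ∃ i : Fin s, (∃ n, parent^[n] i = c) ∧ v ∈ bags i} ∪ ↑X := by
  obtain ⟨hcard, hdisj, hclosed⟩ := hgp
  obtain ⟨hpr, hreach, hsub, hcover, hedge, hconn⟩ := htd
  obtain ⟨hpc, hcne⟩ := hc
  rintro v ⟨hvnot, u, ⟨⟨huW, j, ⟨N, hjN⟩, hubj⟩, hadj⟩⟩
  have hv : v ∈ W ∪ X := hclosed u huW v hadj
  rcases Finset.mem_union.mp hv with hvW | hvX
  · exfalso; apply hvnot
    have huS : (u : V) ∈ (↑(X ∪ W) : Set V) := by simp [huW]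
    have hvS : (v : V) ∈ (↑(X ∪ W) : Set V) := by simp [hvW]
    obtain ⟨i, hui, hvi⟩ := hedge u huS v hvS hadj
    obtain ⟨t, ht⟩ := hconn u ⟨j, hubj⟩
    obtain ⟨n, hn, hchain⟩ := ht j hubj
    have huroot : u ∉ bags root := by
      rw [hroot]; intro h; exact (Finset.disjoint_left.mp hdisj h) huW
    have htc : ∃ m, parent^[m] t = c := by
      rcases le_or_gt n N with h | h
      · exact ⟨N - n, by
          rw [← hn, ← Function.iterate_add_apply, Nat.sub_add_cancel h, hjN]⟩
      · exfalso
        have heq : t = parent^[n - N] c := by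
          rw [← hjN, ← Function.iterate_add_apply, Nat.sub_add_cancel h.le, hn]
        obtain ⟨k, hk'⟩ : ∃ k, n - N = k + 1 :=
          ⟨n - N - 1, (Nat.succ_pred_eq_of_pos (Nat.sub_pos_of_lt h)).symm⟩
        have htr : t = root := by
          rw [heq, hk', Function.iterate_succ_apply, hpc,
            Function.iterate_fixed hpr k]
        have : u ∈ bags t := by
          have := hchain n le_rfl; rwa [hn] at this
        rw [htr] at this
        exact huroot this
    obtain ⟨m, hm⟩ := htc
    obtain ⟨n', hn', _⟩ := ht i hui
    exact ⟨hvW, i, ⟨m + n', by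
      rw [Function.iterate_add_apply, hn', hm]⟩, hvi⟩
  · exact Or.inr (by simpa using hvX)
end

section
/- In the reduction from 3-Dimensional Matching to String 3-Groups: if S ⊆ T is a set of n triples covering every element of P ∪ Q ∪ R exactly once, then the constructed families A, B, C of binary strings admit a grouping into n triples (a,b,c) ∈ A × B × C, each element used exactly once, with a + b + c ⪯ 1 (coordinatewise). -/
/-- Number of bits used to index elements: `⌈log₂ n⌉`. -/
def mbits (n : ℕ) : ℕ := Nat.clog 2 n

/-- The length of the constructed strings: three blocks of `2⌈log n⌉` bits plus two tag bits. -/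
abbrev strLen (n : ℕ) : ℕ :=
  (mbits n + mbits n) + (mbits n + mbits n) + ((mbits n + mbits n) + 2)

/-- The type of constructed binary strings. -/
abbrev Str (n : ℕ) := Fin (strLen n) → Bool

/-- `nb' x`: the `⌈log n⌉`-bit binary representation of `x` concatenated with its bitwise
complement. -/
def nb' (n : ℕ) (x : ℕ) : Fin (mbits n + mbits n) → Bool :=
  Fin.append (fun i : Fin (mbits n) => x.testBit i) (fun i : Fin (mbits n) => !(x.testBit i))

/-- The all-zeros string of length `a`. -/
def zeros (a : ℕ) : Fin a → Bool := fun _ => false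

/-- Type T string for a triple `(p,q,r)`:
`compl(nb'(p)) || compl(nb'(q)) || compl(nb'(r)) || 00`. -/
def tT (n : ℕ) (t : Fin n × Fin n × Fin n) : Str n :=
  Fin.append (Fin.append (fun i => !(nb' n ↑t.1 i)) (fun i => !(nb' n ↑t.2.1 i)))
    (Fin.append (fun i => !(nb' n ↑t.2.2 i)) ![false, false])

/-- Type A string for `p`: `nb'(p) || 0^α || 0^α || 10`. -/
def tA (n : ℕ) (p : ℕ) : Str n :=
  Fin.append (Fin.append (nb' n p) (zeros (mbits n + mbits n)))
    (Fin.append (zeros (mbits n + mbits n)) ![true, false])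

/-- Type B string for `q`: `0^α || nb'(q) || 0^α || 01`. -/
def tB (n : ℕ) (q : ℕ) : Str n :=
  Fin.append (Fin.append (zeros (mbits n + mbits n)) (nb' n q))
    (Fin.append (zeros (mbits n + mbits n)) ![false, true])

/-- Type CA string for `r`: `0^α || 0^α || nb'(r) || 01`. -/
def tCA (n : ℕ) (r : ℕ) : Str n :=
  Fin.append (Fin.append (zeros (mbits n + mbits n)) (zeros (mbits n + mbits n)))
    (Fin.append (nb' n r) ![false, true])

/-- Type CB string: `0^α || 0^α || 0^α || 10`. -/
def tCB (n : ℕ) : Str n :=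
  Fin.append (Fin.append (zeros (mbits n + mbits n)) (zeros (mbits n + mbits n)))
    (Fin.append (zeros (mbits n + mbits n)) ![true, false])

/-- The family `A`: one type A string per `p`, plus `c_r - 1` copies of the type CA string for
each `r`, where `c_r` is the number of triples of `T` with third coordinate `r`. -/
def famA (n : ℕ) (T : Finset (Fin n × Fin n × Fin n)) : Multiset (Str n) :=
  (Finset.univ.val.map fun p : Fin n => tA n ↑p) +
  (Finset.univ.val.bind fun r : Fin n =>
    Multiset.replicate ((T.filter fun t => t.2.2 = r).card - 1) (tCA n ↑r))

/-- The family `B`: one type B string per `q`, plus `c_r - 1` copies of the type CB string for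
each `r`. -/
def famB (n : ℕ) (T : Finset (Fin n × Fin n × Fin n)) : Multiset (Str n) :=
  (Finset.univ.val.map fun q : Fin n => tB n ↑q) +
  (Finset.univ.val.bind fun r : Fin n =>
    Multiset.replicate ((T.filter fun t => t.2.2 = r).card - 1) (tCB n))

/-- The family `C`: one type T string per triple of `T`. -/
def famC (n : ℕ) (T : Finset (Fin n × Fin n × Fin n)) : Multiset (Str n) :=
  T.val.map (tT n)

/-- A triple of strings is valid if in every coordinate at most one of them has a `1`. -/
def ValidTriple (n : ℕ) (g : Str n × Str n × Str n) : Prop :=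
  ∀ i, ((if g.1 i then 1 else 0) + (if g.2.1 i then 1 else 0) +
    (if g.2.2 i then 1 else 0) : ℕ) ≤ 1

section Aux
variable {X Y : Type*} [DecidableEq X]

lemma map_comp_eq_bind {n : ℕ} (m : Multiset X) (g : X → Fin n) (f : Fin n → Y) :
    m.map (fun t => f (g t)) =
    Finset.univ.val.bind fun r => Multiset.replicate (Multiset.card (m.filter fun t => g t = r)) (f r) := by
  have hg : m.map g = Finset.univ.val.bind fun r =>
      Multiset.replicate (Multiset.card (m.filter fun t => g t = r)) r := by
    ext a
    rw [Multiset.count_bind]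
    have : (Multiset.map (fun b => Multiset.count a
        (Multiset.replicate (Multiset.card (m.filter fun t => g t = b)) b)) Finset.univ.val).sum
        = ∑ b : Fin n, if b = a then Multiset.card (m.filter fun t => g t = b) else 0 := by
      simp [Finset.sum, Multiset.count_replicate]
    rw [this, Finset.sum_ite_eq', Multiset.count_map]
    simp [eq_comm]
  calc m.map (fun t => f (g t)) = (m.map g).map f := by rw [Multiset.map_map]; rfl
    _ = _ := by rw [hg, Multiset.map_bind]; simp
end Aux

lemma map_eq_univ {X Y : Type*} [DecidableEq Y] [Fintype Y] (S : Finset X) (g : X → Y)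
    (hcard : S.card = Fintype.card Y) (huniq : ∀ y, ∃! t, t ∈ S ∧ g t = y) :
    S.val.map g = Finset.univ.val := by
  have nodup : (S.val.map g).Nodup := by
    refine S.nodup.map_on ?_
    intro a ha b hb hab
    obtain ⟨t, _, hu⟩ := huniq (g a)
    rw [hu a ⟨ha, rfl⟩, hu b ⟨hb, hab.symm⟩]
  have : (⟨S.val.map g, nodup⟩ : Finset Y) = Finset.univ := by
    apply Finset.eq_univ_of_card
    rw [Finset.card, Multiset.card_map]; rw [Finset.card] at hcard; exact hcard
  exact congrArg Finset.val this
lemma validA (n : ℕ) (t : Fin n × Fin n × Fin n) :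
    ValidTriple n (tA n ↑t.1, tB n ↑t.2.1, tT n t) := by
  intro i
  refine Fin.addCases (fun j => ?_) (fun j => ?_) i
  · refine Fin.addCases (fun k => ?_) (fun k => ?_) j
    · simp only [tA, tB, tT, zeros, Fin.append_left]
      cases nb' n ↑t.1 k <;> simp
    · simp only [tA, tB, tT, zeros, Fin.append_left, Fin.append_right]
      cases nb' n ↑t.2.1 k <;> simp
  · refine Fin.addCases (fun k => ?_) (fun k => ?_) j
    · simp only [tA, tB, tT, zeros, Fin.append_left, Fin.append_right]
      cases nb' n ↑t.2.2 k <;> simp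
    · simp only [tA, tB, tT, zeros, Fin.append_right]
      fin_cases k <;> simp

lemma validC (n : ℕ) (t : Fin n × Fin n × Fin n) :
    ValidTriple n (tCA n ↑t.2.2, tCB n, tT n t) := by
  intro i
  refine Fin.addCases (fun j => ?_) (fun j => ?_) i
  · refine Fin.addCases (fun k => ?_) (fun k => ?_) j
    · simp only [tCA, tCB, tT, zeros, Fin.append_left]
      cases nb' n ↑t.1 k <;> simp
    · simp only [tCA, tCB, tT, zeros, Fin.append_left, Fin.append_right]
      cases nb' n ↑t.2.1 k <;> simp
  · refine Fin.addCases (fun k => ?_) (fun k => ?_) j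
    · simp only [tCA, tCB, tT, zeros, Fin.append_left, Fin.append_right]
      cases nb' n ↑t.2.2 k <;> simp
    · simp only [tCA, tCB, tT, zeros, Fin.append_right]
      fin_cases k <;> simp

/-- If `S ⊆ T` is a set of `n` triples covering every element exactly once, then the
constructed families `A`, `B`, `C` admit a valid grouping: a multiset of triples using each
element of each family exactly once, with coordinatewise sum at most `1` in each triple. -/
theorem grouping_of_matching (n : ℕ) (T : Finset (Fin n × Fin n × Fin n))
    (hdeg : ∀ x : Fin n, (T.filter fun t => t.1 = x).card ≤ 3 ∧
      (T.filter fun t => t.2.1 = x).card ≤ 3 ∧ (T.filter fun t => t.2.2 = x).card ≤ 3)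
    (S : Finset (Fin n × Fin n × Fin n)) (hST : S ⊆ T) (hcard : S.card = n)
    (h1 : ∀ p : Fin n, ∃! t, t ∈ S ∧ t.1 = p)
    (h2 : ∀ q : Fin n, ∃! t, t ∈ S ∧ t.2.1 = q)
    (h3 : ∀ r : Fin n, ∃! t, t ∈ S ∧ t.2.2 = r) :
    ∃ M : Multiset (Str n × Str n × Str n),
      M.map Prod.fst = famA n T ∧ M.map (fun g => g.2.1) = famB n T ∧
      M.map (fun g => g.2.2) = famC n T ∧ ∀ g ∈ M, ValidTriple n g := by
  
  have hle : S.val ≤ T.val := Finset.val_le_iff.2 hST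
  -- for each r, S has exactly one triple with third coord r
  have hone : ∀ r : Fin n, Multiset.card (S.val.filter fun t => t.2.2 = r) = 1 := by
    intro r
    obtain ⟨t, ⟨htS, htr⟩, hu⟩ := h3 r
    have hfs : S.filter (fun t => t.2.2 = r) = {t} := by
      apply Finset.eq_singleton_iff_unique_mem.2
      refine ⟨Finset.mem_filter.2 ⟨htS, htr⟩, fun a ha => ?_⟩
      obtain ⟨h1', h2'⟩ := Finset.mem_filter.1 ha
      exact hu a ⟨h1', h2'⟩
    have : S.val.filter (fun t => t.2.2 = r) = (S.filter (fun t => t.2.2 = r)).val := rfl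
    rw [this, hfs]; rfl
  have hcount : ∀ r : Fin n, Multiset.card ((T.val - S.val).filter fun t => t.2.2 = r)
      = (T.filter fun t => t.2.2 = r).card - 1 := by
    intro r
    rw [Multiset.filter_sub, Multiset.card_sub (Multiset.filter_le_filter _ hle), hone r]
    rfl
  refine ⟨S.val.map (fun t => (tA n ↑t.1, tB n ↑t.2.1, tT n t)) +
    (T.val - S.val).map (fun t => (tCA n ↑t.2.2, tCB n, tT n t)), ?_, ?_, ?_, ?_⟩
  · rw [Multiset.map_add, Multiset.map_map, Multiset.map_map]
    show S.val.map (fun t => tA n ↑t.1) + (T.val - S.val).map (fun t => tCA n ↑t.2.2) = _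
    rw [famA]
    congr 1
    · have := map_eq_univ S (fun t => t.1) (by simpa using hcard) h1
      calc S.val.map (fun t => tA n ↑t.1)
          = (S.val.map (fun t => t.1)).map (fun p : Fin n => tA n ↑p) := by
            rw [Multiset.map_map]; rfl
        _ = _ := by rw [this]
    · rw [map_comp_eq_bind (T.val - S.val) (fun t => t.2.2) (fun r => tCA n ↑r)]
      apply congrArg
      funext r
      rw [hcount r]
  · rw [Multiset.map_add, Multiset.map_map, Multiset.map_map]
    show S.val.map (fun t => tB n ↑t.2.1) + (T.val - S.val).map (fun _ => tCB n) = _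
    rw [famB]
    congr 1
    · have := map_eq_univ S (fun t => t.2.1) (by simpa using hcard) h2
      calc S.val.map (fun t => tB n ↑t.2.1)
          = (S.val.map (fun t => t.2.1)).map (fun q : Fin n => tB n ↑q) := by
            rw [Multiset.map_map]; rfl
        _ = _ := by rw [this]
    · rw [map_comp_eq_bind (T.val - S.val) (fun t => t.2.2) (fun _ => tCB n)]
      apply congrArg
      funext r
      rw [hcount r]
  · rw [Multiset.map_add, Multiset.map_map, Multiset.map_map]
    show S.val.map (tT n) + (T.val - S.val).map (tT n) = _
    rw [famC, ← Multiset.map_add, add_comm, tsub_add_cancel_of_le hle]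
  · intro g hg
    rcases Multiset.mem_add.1 hg with h | h <;> obtain ⟨t, _, rfl⟩ := Multiset.mem_map.1 h
    · exact validA n t
    · exact validC n t
end

section
/- In the reduction from 3-Dimensional Matching to String 3-Groups: any valid grouping of the constructed strings induces a solution S ⊆ T to the 3-Dimensional Matching instance, namely the set of triples (p,q,r) whose type T string is grouped with a type A string and a type B string; this S covers each element of P ∪ Q ∪ R exactly once. -/
section Aux2
open Classical

variable {n : ℕ}

lemma SG_n_le_pow (n : ℕ) : n ≤ 2 ^ mbits n := Nat.le_pow_clog (by norm_num) n

lemma SG_nb'_le {n x y : ℕ} (hx : x < n) (hy : y < n)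
    (h : ∀ j, nb' n x j = true → nb' n y j = true) : x = y := by
  apply Nat.eq_of_testBit_eq
  intro i
  by_cases hi : i < mbits n
  · have h1 := h (Fin.castAdd (mbits n) ⟨i, hi⟩)
    have h2 := h (Fin.natAdd (mbits n) ⟨i, hi⟩)
    simp only [nb', Fin.append_left, Fin.append_right] at h1 h2
    revert h1 h2
    cases hxb : x.testBit i <;> cases hyb : y.testBit i <;> simp
  · have hm : 2 ^ mbits n ≤ 2 ^ i := Nat.pow_le_pow_right (by norm_num) (le_of_not_gt hi)
    have hx2 : x < 2 ^ i := lt_of_lt_of_le (lt_of_lt_of_le hx (SG_n_le_pow n)) hm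
    have hy2 : y < 2 ^ i := lt_of_lt_of_le (lt_of_lt_of_le hy (SG_n_le_pow n)) hm
    rw [Nat.testBit_lt_two_pow hx2, Nat.testBit_lt_two_pow hy2]

lemma SG_nb'_inj {n x y : ℕ} (hx : x < n) (hy : y < n)
    (h : ∀ j, nb' n x j = nb' n y j) : x = y :=
  SG_nb'_le hx hy (fun j hj => (h j) ▸ hj)

def bI1 (n : ℕ) (j : Fin (mbits n + mbits n)) : Fin (strLen n) :=
  Fin.castAdd ((mbits n + mbits n) + 2) (Fin.castAdd (mbits n + mbits n) j)
def bI2 (n : ℕ) (j : Fin (mbits n + mbits n)) : Fin (strLen n) :=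
  Fin.castAdd ((mbits n + mbits n) + 2) (Fin.natAdd (mbits n + mbits n) j)
def bI3 (n : ℕ) (j : Fin (mbits n + mbits n)) : Fin (strLen n) :=
  Fin.natAdd ((mbits n + mbits n) + (mbits n + mbits n)) (Fin.castAdd 2 j)
def bI4 (n : ℕ) (k : Fin 2) : Fin (strLen n) :=
  Fin.natAdd ((mbits n + mbits n) + (mbits n + mbits n)) (Fin.natAdd (mbits n + mbits n) k)

@[simp] lemma tT_b1 (t : Fin n × Fin n × Fin n) (j) : tT n t (bI1 n j) = !(nb' n ↑t.1 j) := by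
  simp only [tT, bI1, Fin.append_left]
@[simp] lemma tT_b2 (t : Fin n × Fin n × Fin n) (j) : tT n t (bI2 n j) = !(nb' n ↑t.2.1 j) := by
  simp only [tT, bI2, Fin.append_left, Fin.append_right]
@[simp] lemma tT_b3 (t : Fin n × Fin n × Fin n) (j) : tT n t (bI3 n j) = !(nb' n ↑t.2.2 j) := by
  simp only [tT, bI3, Fin.append_left, Fin.append_right]
@[simp] lemma tT_b4 (t : Fin n × Fin n × Fin n) (k) : tT n t (bI4 n k) = false := by
  simp only [tT, bI4, Fin.append_right]
  fin_cases k <;> rfl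

@[simp] lemma tA_b1 (p : ℕ) (j) : tA n p (bI1 n j) = nb' n p j := by
  simp only [tA, bI1, Fin.append_left]
@[simp] lemma tA_b2 (p : ℕ) (j) : tA n p (bI2 n j) = false := by
  simp only [tA, bI2, zeros, Fin.append_left, Fin.append_right]
@[simp] lemma tA_b3 (p : ℕ) (j) : tA n p (bI3 n j) = false := by
  simp only [tA, bI3, zeros, Fin.append_left, Fin.append_right]
@[simp] lemma tA_b4 (p : ℕ) (k) : tA n p (bI4 n k) = ![true, false] k := by
  simp only [tA, bI4, Fin.append_right]

@[simp] lemma tB_b2 (q : ℕ) (j) : tB n q (bI2 n j) = nb' n q j := by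
  simp only [tB, bI2, Fin.append_left, Fin.append_right]
@[simp] lemma tB_b4 (q : ℕ) (k) : tB n q (bI4 n k) = ![false, true] k := by
  simp only [tB, bI4, Fin.append_right]

@[simp] lemma tCA_b3 (r : ℕ) (j) : tCA n r (bI3 n j) = nb' n r j := by
  simp only [tCA, bI3, Fin.append_left, Fin.append_right]
@[simp] lemma tCA_b4 (r : ℕ) (k) : tCA n r (bI4 n k) = ![false, true] k := by
  simp only [tCA, bI4, Fin.append_right]

@[simp] lemma tCB_b4 (k : Fin 2) : tCB n (bI4 n k) = ![true, false] k := by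
  simp only [tCB, bI4, Fin.append_right]

lemma tA_ne_tCA (p r : ℕ) : tA n p ≠ tCA n r := by
  intro h
  have := congrFun h (bI4 n 0)
  simp at this

lemma tB_ne_tCB (q : ℕ) : tB n q ≠ tCB n := by
  intro h
  have := congrFun h (bI4 n 1)
  simp at this

lemma tA_inj {p p' : Fin n} (h : tA n (p : ℕ) = tA n (p' : ℕ)) : p = p' :=
  Fin.ext <| SG_nb'_inj p.isLt p'.isLt fun j => by
    have := congrFun h (bI1 n j); simpa using this

lemma tCA_inj {r r' : Fin n} (h : tCA n (r : ℕ) = tCA n (r' : ℕ)) : r = r' :=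
  Fin.ext <| SG_nb'_inj r.isLt r'.isLt fun j => by
    have := congrFun h (bI3 n j); simpa using this

lemma tB_inj {q q' : Fin n} (h : tB n (q : ℕ) = tB n (q' : ℕ)) : q = q' :=
  Fin.ext <| SG_nb'_inj q.isLt q'.isLt fun j => by
    have := congrFun h (bI2 n j); simpa using this

lemma tT_inj : Function.Injective (tT n) := by
  intro t t' h
  have h1 : t.1 = t'.1 := Fin.ext <| SG_nb'_inj t.1.isLt t'.1.isLt fun j => by
    have := congrFun h (bI1 n j); simpa using this
  have h2 : t.2.1 = t'.2.1 := Fin.ext <| SG_nb'_inj t.2.1.isLt t'.2.1.isLt fun j => by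
    have := congrFun h (bI2 n j); simpa using this
  have h3 : t.2.2 = t'.2.2 := Fin.ext <| SG_nb'_inj t.2.2.isLt t'.2.2.isLt fun j => by
    have := congrFun h (bI3 n j); simpa using this
  exact Prod.ext h1 (Prod.ext h2 h3)

lemma valid12 {g : Str n × Str n × Str n} (h : ValidTriple n g) (i : Fin (strLen n))
    (h1 : g.1 i = true) (h2 : g.2.1 i = true) : False := by
  have h0 := h i
  rw [h1, h2] at h0
  by_cases hb : g.2.2 i = true <;> simp [hb] at h0
lemma valid23 {g : Str n × Str n × Str n} (h : ValidTriple n g) (i : Fin (strLen n))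
    (h1 : g.2.1 i = true) (h2 : g.2.2 i = true) : False := by
  have h0 := h i
  rw [h1, h2] at h0
  by_cases hb : g.1 i = true <;> simp [hb] at h0

lemma valid13 {g : Str n × Str n × Str n} (h : ValidTriple n g) (i : Fin (strLen n))
    (h1 : g.1 i = true) (h2 : g.2.2 i = true) : False := by
  have h0 := h i
  rw [h1, h2] at h0
  by_cases hb : g.2.1 i = true <;> simp [hb] at h0

end Aux2
section Aux3
open Classical

variable {n : ℕ}

/-- classification of groups -/
lemma SG_classify {T : Finset (Fin n × Fin n × Fin n)} {M : Multiset (Str n × Str n × Str n)}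
    (hA : M.map Prod.fst = famA n T) (hB : M.map (fun g => g.2.1) = famB n T)
    (hC : M.map (fun g => g.2.2) = famC n T)
    (hvalid : ∀ g ∈ M, ValidTriple n g) {g : Str n × Str n × Str n} (hg : g ∈ M) :
    ∃ t ∈ T, g.2.2 = tT n t ∧
      ((g.1 = tA n ↑t.1 ∧ g.2.1 = tB n ↑t.2.1) ∨ (g.1 = tCA n ↑t.2.2 ∧ g.2.1 = tCB n)) := by
  have hv := hvalid g hg
  have h3 : g.2.2 ∈ famC n T := by
    rw [← hC]; exact Multiset.mem_map_of_mem _ hg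
  obtain ⟨t, htT, ht3⟩ := Multiset.mem_map.1 h3
  have htT' : t ∈ T := htT
  have h1 : g.1 ∈ famA n T := by
    rw [← hA]; exact Multiset.mem_map_of_mem _ hg
  have h2 : g.2.1 ∈ famB n T := by
    rw [← hB]; exact Multiset.mem_map_of_mem _ hg
  refine ⟨t, htT', ht3.symm, ?_⟩
  rcases Multiset.mem_add.1 h1 with hA1 | hA2
  · -- g.1 = tA p
    obtain ⟨p, _, hp⟩ := Multiset.mem_map.1 hA1
    -- force p = t.1
    have hp1 : (p : ℕ) = ↑t.1 := by
      apply SG_nb'_le p.isLt t.1.isLt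
      intro j hj
      by_contra hne
      apply valid13 hv (bI1 n j)
      · rw [← hp, tA_b1]; exact hj
      · rw [← ht3, tT_b1]; simp at hne; simp [hne]
    left
    have hgA : g.1 = tA n ↑t.1 := by rw [← hp, hp1]
    refine ⟨hgA, ?_⟩
    rcases Multiset.mem_add.1 h2 with hB1 | hB2
    · obtain ⟨q, _, hq⟩ := Multiset.mem_map.1 hB1
      have hq1 : (q : ℕ) = ↑t.2.1 := by
        apply SG_nb'_le q.isLt t.2.1.isLt
        intro j hj
        by_contra hne
        apply valid23 hv (bI2 n j)
        · rw [← hq, tB_b2]; exact hj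
        · rw [← ht3, tT_b2]; simp at hne; simp [hne]
      rw [← hq, hq1]
    · -- g.2.1 = tCB : contradiction with tA at tag 0
      obtain ⟨r, _, hr⟩ := Multiset.mem_bind.1 hB2
      have hcb : g.2.1 = tCB n := Multiset.eq_of_mem_replicate hr
      exfalso
      apply valid12 hv (bI4 n 0)
      · rw [hgA, tA_b4]; rfl
      · rw [hcb, tCB_b4]; rfl
  · -- g.1 = tCA r
    obtain ⟨r, _, hr⟩ := Multiset.mem_bind.1 hA2
    have hca : g.1 = tCA n ↑r := Multiset.eq_of_mem_replicate hr
    have hr1 : (r : ℕ) = ↑t.2.2 := by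
      apply SG_nb'_le r.isLt t.2.2.isLt
      intro j hj
      by_contra hne
      apply valid13 hv (bI3 n j)
      · rw [hca, tCA_b3]; exact hj
      · rw [← ht3, tT_b3]; simp at hne; simp [hne]
    right
    have hgCA : g.1 = tCA n ↑t.2.2 := by rw [hca, hr1]
    refine ⟨hgCA, ?_⟩
    rcases Multiset.mem_add.1 h2 with hB1 | hB2
    · obtain ⟨q, _, hq⟩ := Multiset.mem_map.1 hB1
      exfalso
      apply valid12 hv (bI4 n 1)
      · rw [hgCA, tCA_b4]; rfl
      · rw [← hq, tB_b4]; rfl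
    · obtain ⟨r', _, hr'⟩ := Multiset.mem_bind.1 hB2
      exact Multiset.eq_of_mem_replicate hr'

/-- count of tA p in famA is 1 -/
lemma SG_count_tA (T : Finset (Fin n × Fin n × Fin n)) (p : Fin n) :
    (famA n T).count (tA n ↑p) = 1 := by
  rw [famA, Multiset.count_add]
  have h1 : ((Finset.univ.val.map fun p : Fin n => tA n ↑p).count (tA n ↑p)) = 1 := by
    rw [Multiset.count_map_eq_count' _ _ (fun a b h => tA_inj h) p]
    exact Multiset.count_eq_one_of_mem Finset.univ.nodup (Finset.mem_univ p)
  have h2 : ((Finset.univ.val.bind fun r : Fin n =>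
      Multiset.replicate ((T.filter fun t => t.2.2 = r).card - 1) (tCA n ↑r)).count
        (tA n ↑p)) = 0 := by
    rw [Multiset.count_eq_zero]
    intro hmem
    obtain ⟨r, _, hr⟩ := Multiset.mem_bind.1 hmem
    exact tA_ne_tCA (↑p) (↑r) (Multiset.eq_of_mem_replicate hr)
  omega

/-- count of tB q in famB is 1 -/
lemma SG_count_tB (T : Finset (Fin n × Fin n × Fin n)) (q : Fin n) :
    (famB n T).count (tB n ↑q) = 1 := by
  rw [famB, Multiset.count_add]
  have h1 : ((Finset.univ.val.map fun q : Fin n => tB n ↑q).count (tB n ↑q)) = 1 := by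
    rw [Multiset.count_map_eq_count' _ _ (fun a b h => tB_inj h) q]
    exact Multiset.count_eq_one_of_mem Finset.univ.nodup (Finset.mem_univ q)
  have h2 : ((Finset.univ.val.bind fun r : Fin n =>
      Multiset.replicate ((T.filter fun t => t.2.2 = r).card - 1) (tCB n)).count
        (tB n ↑q)) = 0 := by
    rw [Multiset.count_eq_zero]
    intro hmem
    obtain ⟨r, _, hr⟩ := Multiset.mem_bind.1 hmem
    exact tB_ne_tCB (↑q) (Multiset.eq_of_mem_replicate hr)
  omega

/-- count of tCA r in famA is c_r - 1 -/
lemma SG_count_tCA (T : Finset (Fin n × Fin n × Fin n)) (r : Fin n) :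
    (famA n T).count (tCA n ↑r) = (T.filter fun t => t.2.2 = r).card - 1 := by
  rw [famA, Multiset.count_add]
  have h1 : ((Finset.univ.val.map fun p : Fin n => tA n ↑p).count (tCA n ↑r)) = 0 := by
    rw [Multiset.count_eq_zero]
    intro hmem
    obtain ⟨p, _, hp⟩ := Multiset.mem_map.1 hmem
    exact tA_ne_tCA (↑p) (↑r) hp
  have h2 : ((Finset.univ.val.bind fun r' : Fin n =>
      Multiset.replicate ((T.filter fun t => t.2.2 = r').card - 1) (tCA n ↑r')).count
        (tCA n ↑r)) = (T.filter fun t => t.2.2 = r).card - 1 := by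
    rw [Multiset.count_bind]
    have : (Finset.univ.val.map fun r' : Fin n =>
        (Multiset.replicate ((T.filter fun t => t.2.2 = r').card - 1) (tCA n ↑r')).count
          (tCA n ↑r)) =
        Finset.univ.val.map fun r' : Fin n =>
          if r = r' then (T.filter fun t => t.2.2 = r').card - 1 else 0 := by
      apply Multiset.map_congr rfl
      intro r' _
      rw [Multiset.count_replicate]
      by_cases h : r = r'
      · subst h; simp
      · rw [if_neg h, if_neg (fun he => h (tCA_inj he).symm)]
    rw [this, Finset.sum_map_val, Finset.sum_ite_eq]
    simp
  omega

end Aux3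
section Aux4
open Classical

variable {n : ℕ}

lemma SG_c_pos {T : Finset (Fin n × Fin n × Fin n)} {M : Multiset (Str n × Str n × Str n)}
    (hA : M.map Prod.fst = famA n T) (hC : M.map (fun g => g.2.2) = famC n T) (r : Fin n) :
    1 ≤ (T.filter fun t => t.2.2 = r).card := by
  have e0 : Multiset.card (famA n T) = Multiset.card (famC n T) := by
    rw [← hA, ← hC, Multiset.card_map, Multiset.card_map]
  have eA : Multiset.card (famA n T)
      = n + ∑ r' : Fin n, ((T.filter fun t => t.2.2 = r').card - 1) := by
    rw [famA, Multiset.card_add, Multiset.card_map, Multiset.card_bind]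
    congr 1
    · simp
    · rw [show (Multiset.map (Multiset.card ∘ fun r : Fin n =>
          Multiset.replicate ((T.filter fun t => t.2.2 = r).card - 1) (tCA n ↑r))
          Finset.univ.val)
        = Finset.univ.val.map (fun r : Fin n => (T.filter fun t => t.2.2 = r).card - 1) from
          Multiset.map_congr rfl fun r' _ => Multiset.card_replicate _ _]
      exact Finset.sum_map_val _ _
  have eC : Multiset.card (famC n T) = ∑ r' : Fin n, (T.filter fun t => t.2.2 = r').card := by
    rw [famC, Multiset.card_map]
    exact Finset.card_eq_sum_card_fiberwise (fun t _ => Finset.mem_univ t.2.2)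
  by_contra hr0
  have hr0' : (T.filter fun t => t.2.2 = r).card = 0 := by omega
  have hlt : (∑ r' : Fin n, (T.filter fun t => t.2.2 = r').card)
      < ∑ r' : Fin n, (1 + ((T.filter fun t => t.2.2 = r').card - 1)) := by
    apply Finset.sum_lt_sum (fun i _ => by omega) ⟨r, Finset.mem_univ r, by omega⟩
  rw [Finset.sum_add_distrib, Finset.sum_const, Finset.card_univ, Fintype.card_fin,
    smul_eq_mul, mul_one] at hlt
  omega

lemma SG_count_famC {T : Finset (Fin n × Fin n × Fin n)} {t : Fin n × Fin n × Fin n}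
    (ht : t ∈ T) : (famC n T).count (tT n t) = 1 := by
  rw [famC, Multiset.count_map_eq_count' _ _ tT_inj t]
  exact Multiset.count_eq_one_of_mem T.nodup ht

end Aux4
section Aux5
open Classical

lemma SG_card_filter {α β : Type*} [DecidableEq β] (f : α → β) (s : Multiset α) (b : β)
    (p : α → Prop) [DecidablePred p] (hp : ∀ a, p a ↔ b = f a) :
    (s.filter p).card = (s.map f).count b := by
  rw [Multiset.count_map, Multiset.filter_congr (fun a _ => hp a)]

end Aux5
open Classical in
/-- Any valid grouping of the constructed strings induces a solution `S ⊆ T` of the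
3-dimensional matching instance: the set of triples whose type T string is grouped with a
type A string and a type B string covers each element of `P ∪ Q ∪ R` exactly once. -/
theorem matching_of_grouping (n : ℕ) (T : Finset (Fin n × Fin n × Fin n))
    (M : Multiset (Str n × Str n × Str n))
    (hA : M.map Prod.fst = famA n T) (hB : M.map (fun g => g.2.1) = famB n T)
    (hC : M.map (fun g => g.2.2) = famC n T)
    (hvalid : ∀ g ∈ M, ValidTriple n g) :
    ∃ S : Finset (Fin n × Fin n × Fin n), S ⊆ T ∧
      S = (T.filter fun t => ∃ g ∈ M, g.2.2 = tT n t ∧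
        (∃ p : Fin n, g.1 = tA n ↑p) ∧ (∃ q : Fin n, g.2.1 = tB n ↑q)) ∧
      (∀ p : Fin n, ∃! t, t ∈ S ∧ t.1 = p) ∧
      (∀ q : Fin n, ∃! t, t ∈ S ∧ t.2.1 = q) ∧
      (∀ r : Fin n, ∃! t, t ∈ S ∧ t.2.2 = r) := by
  classical
  have hmemS : ∀ t : Fin n × Fin n × Fin n,
      (t ∈ T ∧ ∃ g ∈ M, g.2.2 = tT n t ∧
        (∃ p : Fin n, g.1 = tA n ↑p) ∧ (∃ q : Fin n, g.2.1 = tB n ↑q)) ↔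
      (t ∈ T ∧ ∃ g ∈ M, g.2.2 = tT n t ∧ g.1 = tA n ↑t.1 ∧ g.2.1 = tB n ↑t.2.1) := by
    intro t
    constructor
    · rintro ⟨htT, g, hgM, hg3, ⟨p, hgp⟩, ⟨q, hgq⟩⟩
      obtain ⟨t', ht'T, hg3', hcase⟩ := SG_classify hA hB hC hvalid hgM
      have htt : t' = t := tT_inj (hg3'.symm.trans hg3)
      subst htt
      rcases hcase with ⟨h1, h2⟩ | ⟨h1, h2⟩
      · exact ⟨htT, g, hgM, hg3, h1, h2⟩
      · exact absurd (hgp.symm.trans h1) (tA_ne_tCA _ _)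
    · rintro ⟨htT, g, hgM, hg3, hg1, hg2⟩
      exact ⟨htT, g, hgM, hg3, ⟨t.1, hg1⟩, ⟨t.2.1, hg2⟩⟩
  refine ⟨_, Finset.filter_subset _ _, rfl, ?_, ?_, ?_⟩
  · -- each p is covered exactly once
    intro p
    have hcnt : (M.filter fun g => tA n ↑p = g.1).card = 1 := by
      rw [SG_card_filter Prod.fst M (tA n ↑p) _ (fun a => Iff.rfl), hA, SG_count_tA]
    obtain ⟨g0, hg0⟩ := Multiset.card_eq_one.1 hcnt
    have hg0mem : g0 ∈ M.filter fun g => tA n ↑p = g.1 := by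
      rw [hg0]; exact Multiset.mem_singleton_self g0
    have hg0M : g0 ∈ M := Multiset.mem_of_mem_filter hg0mem
    have hg0p := Multiset.of_mem_filter hg0mem
    obtain ⟨t, htT, hg3, hcase⟩ := SG_classify hA hB hC hvalid hg0M
    rcases hcase with ⟨h1, h2⟩ | ⟨h1, h2⟩
    · have hpt : p = t.1 := tA_inj (hg0p.trans h1)
      refine ⟨t, ⟨Finset.mem_filter.2 ⟨htT, g0, hg0M, hg3, ⟨t.1, h1⟩, ⟨t.2.1, h2⟩⟩,
        hpt.symm⟩, ?_⟩
      rintro t' ⟨ht'S, ht'p⟩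
      obtain ⟨ht'T, g', hg'M, hg'3, hg'1, hg'2⟩ := (hmemS t').1 (Finset.mem_filter.1 ht'S)
      have hg'mem : g' ∈ M.filter fun g => tA n ↑p = g.1 :=
        Multiset.mem_filter.2 ⟨hg'M, by rw [hg'1, ht'p]⟩
      rw [hg0] at hg'mem
      have hgg : g' = g0 := Multiset.mem_singleton.1 hg'mem
      apply tT_inj
      rw [← hg'3, hgg]
      exact hg3
    · exact absurd (hg0p.trans h1) (tA_ne_tCA _ _)
  · -- each q is covered exactly once
    intro q
    have hcnt : (M.filter fun g => tB n ↑q = g.2.1).card = 1 := by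
      rw [SG_card_filter (fun g => g.2.1) M (tB n ↑q) _ (fun a => Iff.rfl), hB, SG_count_tB]
    obtain ⟨g0, hg0⟩ := Multiset.card_eq_one.1 hcnt
    have hg0mem : g0 ∈ M.filter fun g => tB n ↑q = g.2.1 := by
      rw [hg0]; exact Multiset.mem_singleton_self g0
    have hg0M : g0 ∈ M := Multiset.mem_of_mem_filter hg0mem
    have hg0q := Multiset.of_mem_filter hg0mem
    obtain ⟨t, htT, hg3, hcase⟩ := SG_classify hA hB hC hvalid hg0M
    rcases hcase with ⟨h1, h2⟩ | ⟨h1, h2⟩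
    · have hqt : q = t.2.1 := tB_inj (hg0q.trans h2)
      refine ⟨t, ⟨Finset.mem_filter.2 ⟨htT, g0, hg0M, hg3, ⟨t.1, h1⟩, ⟨t.2.1, h2⟩⟩,
        hqt.symm⟩, ?_⟩
      rintro t' ⟨ht'S, ht'q⟩
      obtain ⟨ht'T, g', hg'M, hg'3, hg'1, hg'2⟩ := (hmemS t').1 (Finset.mem_filter.1 ht'S)
      have hg'mem : g' ∈ M.filter fun g => tB n ↑q = g.2.1 :=
        Multiset.mem_filter.2 ⟨hg'M, by rw [hg'2, ht'q]⟩
      rw [hg0] at hg'mem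
      have hgg : g' = g0 := Multiset.mem_singleton.1 hg'mem
      apply tT_inj
      rw [← hg'3, hgg]
      exact hg3
    · exact absurd (hg0q.trans h2) (tB_ne_tCB _)
  · -- each r is covered exactly once
    intro r
    have hc1 : 1 ≤ (T.filter fun t => t.2.2 = r).card := SG_c_pos hA hC r
    have hPcard : (M.filter fun g => ∃ t ∈ T, t.2.2 = r ∧ g.2.2 = tT n t).card
        = (T.filter fun t => t.2.2 = r).card := by
      have h1 : Multiset.countP (fun s => ∃ t ∈ T, t.2.2 = r ∧ s = tT n t)
          (M.map fun g => g.2.2)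
          = (M.filter fun g => ∃ t ∈ T, t.2.2 = r ∧ g.2.2 = tT n t).card :=
        Multiset.countP_map _ M _
      rw [hC, famC] at h1
      have h2 : Multiset.countP (fun s => ∃ t ∈ T, t.2.2 = r ∧ s = tT n t) (T.val.map (tT n))
          = (T.val.filter fun t => ∃ t' ∈ T, t'.2.2 = r ∧ tT n t = tT n t').card :=
        Multiset.countP_map _ _ _
      have h3 : (T.val.filter fun t => ∃ t' ∈ T, t'.2.2 = r ∧ tT n t = tT n t')
          = T.val.filter fun t => t.2.2 = r := by
        apply Multiset.filter_congr
        intro t ht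
        constructor
        · rintro ⟨t', ht'T, ht'r, heq⟩
          rw [tT_inj heq]; exact ht'r
        · intro htr
          exact ⟨t, ht, htr, rfl⟩
      rw [h2, h3] at h1
      rw [← h1, Finset.card_def, Finset.filter_val]
    have hDcard : (M.filter fun g =>
        (∃ t ∈ T, t.2.2 = r ∧ g.2.2 = tT n t) ∧ ¬∃ p : Fin n, g.1 = tA n ↑p).card
        = (T.filter fun t => t.2.2 = r).card - 1 := by
      have heq : (M.filter fun g =>
          (∃ t ∈ T, t.2.2 = r ∧ g.2.2 = tT n t) ∧ ¬∃ p : Fin n, g.1 = tA n ↑p)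
          = M.filter fun g => tCA n ↑r = g.1 := by
        apply Multiset.filter_congr
        intro g hg
        obtain ⟨t, htT, hg3, hcase⟩ := SG_classify hA hB hC hvalid hg
        constructor
        · rintro ⟨⟨t', ht'T, ht'r, hgt'⟩, hnA⟩
          have htt : t' = t := tT_inj (hgt'.symm.trans hg3)
          subst htt
          rcases hcase with ⟨h1, _⟩ | ⟨h1, _⟩
          · exact absurd ⟨t'.1, h1⟩ hnA
          · rw [h1, ht'r]
        · intro hgA
          rcases hcase with ⟨h1, _⟩ | ⟨h1, h2⟩
          · exact absurd (hgA.trans h1).symm (tA_ne_tCA _ _)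
          · have hrt : (r : Fin n) = t.2.2 := tCA_inj (hgA.trans h1)
            refine ⟨⟨t, htT, hrt.symm, hg3⟩, ?_⟩
            rintro ⟨p, hp⟩
            exact absurd (hp.symm.trans h1) (tA_ne_tCA _ _)
      rw [heq, SG_card_filter Prod.fst M (tCA n ↑r) _ (fun a => Iff.rfl), hA, SG_count_tCA]
    have hsplit : (M.filter fun g => (∃ t ∈ T, t.2.2 = r ∧ g.2.2 = tT n t)
          ∧ ∃ p : Fin n, g.1 = tA n ↑p).card
        + (M.filter fun g => (∃ t ∈ T, t.2.2 = r ∧ g.2.2 = tT n t)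
          ∧ ¬∃ p : Fin n, g.1 = tA n ↑p).card
        = (M.filter fun g => ∃ t ∈ T, t.2.2 = r ∧ g.2.2 = tT n t).card := by
      rw [← Multiset.filter_filter, ← Multiset.filter_filter, ← Multiset.card_add, ← Multiset.filter_add,
        Multiset.filter_add_not]
    have hQcard : (M.filter fun g => (∃ t ∈ T, t.2.2 = r ∧ g.2.2 = tT n t)
        ∧ ∃ p : Fin n, g.1 = tA n ↑p).card = 1 := by omega
    obtain ⟨g0, hg0⟩ := Multiset.card_eq_one.1 hQcard
    have hg0mem : g0 ∈ M.filter fun g => (∃ t ∈ T, t.2.2 = r ∧ g.2.2 = tT n t)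
        ∧ ∃ p : Fin n, g.1 = tA n ↑p := by
      rw [hg0]; exact Multiset.mem_singleton_self g0
    have hg0M : g0 ∈ M := Multiset.mem_of_mem_filter hg0mem
    obtain ⟨⟨t1, ht1T, ht1r, hg0t1⟩, p0, hg0p0⟩ := Multiset.of_mem_filter hg0mem
    obtain ⟨t, htT, hg3, hcase⟩ := SG_classify hA hB hC hvalid hg0M
    have htt1 : t1 = t := tT_inj (hg0t1.symm.trans hg3)
    have htr : t.2.2 = r := htt1 ▸ ht1r
    rcases hcase with ⟨h1, h2⟩ | ⟨h1, h2⟩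
    · refine ⟨t, ⟨Finset.mem_filter.2 ⟨htT, g0, hg0M, hg3, ⟨t.1, h1⟩, ⟨t.2.1, h2⟩⟩, htr⟩, ?_⟩
      rintro t' ⟨ht'S, ht'r⟩
      obtain ⟨ht'T, g', hg'M, hg'3, hg'1, hg'2⟩ := (hmemS t').1 (Finset.mem_filter.1 ht'S)
      have hg'mem : g' ∈ M.filter fun g => (∃ t ∈ T, t.2.2 = r ∧ g.2.2 = tT n t)
          ∧ ∃ p : Fin n, g.1 = tA n ↑p :=
        Multiset.mem_filter.2 ⟨hg'M, ⟨t', ht'T, ht'r, hg'3⟩, ⟨t'.1, hg'1⟩⟩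
      rw [hg0] at hg'mem
      have hgg : g' = g0 := Multiset.mem_singleton.1 hg'mem
      apply tT_inj
      rw [← hg'3, hgg]
      exact hg3
    · exact absurd (hg0p0.symm.trans h1) (tA_ne_tCA _ _)
end

section
/- Let k ≥ 3 and let w = (w_1,...,w_r) be a palindrome with ⌈2k/3⌉ < w_i ≤ k for all i. Consider the graph G built from disjoint cliques C_0,...,C_r each of size ⌊k/3⌋, with all edges between C_{i−1} and C_i for each i, together with disjoint cliques C^p_1,...,C^p_r with |C^p_i| = w_i − 2⌊k/3⌋, where C^p_i is completely joined to C_{i−1} and C_i. Then the maximal cliques of G are exactly the sets M_i = C_{i−1} ∪ C_i ∪ C^p_i for i = 1,...,r, and |M_i| = w_i. -/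
/-- The vertex type of the gadget graph: the cliques `C_0, …, C_r` (each of size `⌊k/3⌋`)
together with the cliques `C^p_1, …, C^p_r` (with `|C^p_i| = w i - 2⌊k/3⌋`). -/
def GadgetV (r k : ℕ) (w : Fin r → ℕ) : Type :=
  (Fin (r + 1) × Fin (k / 3)) ⊕ (Σ i : Fin r, Fin (w i - 2 * (k / 3)))

/-- The set `M_i = C_{i-1} ∪ C_i ∪ C^p_i`. -/
def GadgetM (r k : ℕ) (w : Fin r → ℕ) (i : Fin r) : Set (GadgetV r k w) :=
  {v | match v with
    | Sum.inl (j, _) => j = i.castSucc ∨ j = i.succ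
    | Sum.inr x => x.1 = i}

/-- The gadget graph: two distinct vertices are adjacent iff they lie in a common `M_i`. -/
def GadgetG (r k : ℕ) (w : Fin r → ℕ) : SimpleGraph (GadgetV r k w) :=
  SimpleGraph.fromRel (fun u v => ∃ i, u ∈ GadgetM r k w i ∧ v ∈ GadgetM r k w i)

/-!
Every vertex `v` lies in the sets `M_i` for `i` in an interval `[v.lo, v.hi]` of indices, and two
vertices are adjacent iff their intervals meet, so the gadget is an interval graph. By Helly's
theorem on a line, a clique has a common index `i` and hence lies in `M_i`. Each `M_i` is a clique
containing a vertex of `C^p_i`, which is nonempty because `w i > 2⌊k/3⌋` and lies in no other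
`M_j`; so the `M_i` are exactly the maximal cliques. Finally `|M_i| = 2⌊k/3⌋ + |C^p_i| = w i`.
-/

theorem Set.Finite.exists_forall_mem_Icc {ι α : Type*} [LinearOrder α] {s : Set ι}
    (hs : s.Finite) (hne : s.Nonempty) {a b : ι → α} (hab : ∀ u ∈ s, ∀ v ∈ s, a u ≤ b v) :
    ∃ x, ∀ v ∈ s, x ∈ Set.Icc (a v) (b v) := by
  obtain ⟨u, hu, hmax⟩ := Set.exists_max_image s a hs hne
  exact ⟨a u, fun v hv => ⟨hmax v hv, hab u hu v hv⟩⟩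

section Gadget

variable {r k : ℕ} {w : Fin r → ℕ}

instance : Finite (GadgetV r k w) := by
  unfold GadgetV; infer_instance

@[simp]
lemma inl_mem_gadgetM {j : Fin (r + 1)} {y : Fin (k / 3)} {i : Fin r} :
    (Sum.inl (j, y) : GadgetV r k w) ∈ GadgetM r k w i ↔ j = i.castSucc ∨ j = i.succ :=
  Iff.rfl

@[simp]
lemma inr_mem_gadgetM {x : Σ j : Fin r, Fin (w j - 2 * (k / 3))} {i : Fin r} :
    (Sum.inr x : GadgetV r k w) ∈ GadgetM r k w i ↔ x.1 = i :=
  Iff.rfl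

namespace GadgetV

def lo : GadgetV r k w → ℕ
  | .inl (j, _) => j - 1
  | .inr x => x.1

def hi : GadgetV r k w → ℕ
  | .inl (j, _) => min j (r - 1)
  | .inr x => x.1

lemma lo_le_hi (v : GadgetV r k w) : v.lo ≤ v.hi := by
  rcases v with ⟨j, _⟩ | x
  · have := j.is_le
    simp only [lo, hi]
    omega
  · exact le_rfl

lemma hi_lt (hr : 0 < r) (v : GadgetV r k w) : v.hi < r := by
  rcases v with ⟨j, _⟩ | x
  · simp only [hi]
    omega
  · exact x.1.isLt

end GadgetV

lemma mem_gadgetM_iff {v : GadgetV r k w} {i : Fin r} :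
    v ∈ GadgetM r k w i ↔ (i : ℕ) ∈ Set.Icc v.lo v.hi := by
  have := i.isLt
  rcases v with ⟨j, _⟩ | x
  · have := j.is_le
    refine inl_mem_gadgetM.trans ?_
    simp only [Fin.ext_iff, Fin.val_castSucc, Fin.val_succ, Set.mem_Icc, GadgetV.lo, GadgetV.hi]
    omega
  · refine inr_mem_gadgetM.trans ?_
    simp only [Fin.ext_iff, Set.mem_Icc, GadgetV.lo, GadgetV.hi]
    omega

lemma gadgetM_isClique (i : Fin r) : (GadgetG r k w).IsClique (GadgetM r k w i) :=
  fun _ hu _ hv huv => (SimpleGraph.fromRel_adj _ _ _).2 ⟨huv, .inl ⟨i, hu, hv⟩⟩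

lemma exists_subset_gadgetM_of_isClique (hr : 0 < r) {S : Set (GadgetV r k w)}
    (hS : (GadgetG r k w).IsClique S) (hne : S.Nonempty) : ∃ i, S ⊆ GadgetM r k w i := by
  have hlo_hi : ∀ u ∈ S, ∀ v ∈ S, u.lo ≤ v.hi := by
    intro u hu v hv
    obtain rfl | huv := eq_or_ne u v
    · exact u.lo_le_hi
    obtain ⟨-, ⟨i, hui, hvi⟩ | ⟨i, hvi, hui⟩⟩ := (SimpleGraph.fromRel_adj _ _ _).1 (hS hu hv huv)
    all_goals exact (mem_gadgetM_iff.1 hui).1.trans (mem_gadgetM_iff.1 hvi).2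
  obtain ⟨x, hx⟩ := S.toFinite.exists_forall_mem_Icc hne hlo_hi
  obtain ⟨v, hv⟩ := hne
  exact ⟨⟨x, (hx v hv).2.trans_lt (v.hi_lt hr)⟩, fun u hu => mem_gadgetM_iff.2 (hx u hu)⟩

lemma pendant_mem_gadgetM {i : Fin r} (hi : 2 * (k / 3) < w i) :
    (Sum.inr ⟨i, ⟨0, by omega⟩⟩ : GadgetV r k w) ∈ GadgetM r k w i :=
  rfl

lemma eq_of_gadgetM_subset {i j : Fin r} (hi : 2 * (k / 3) < w i)
    (hij : GadgetM r k w i ⊆ GadgetM r k w j) : i = j :=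
  hij (pendant_mem_gadgetM hi)

lemma card_gadgetM (i : Fin r) :
    Nat.card (GadgetM r k w i) = 2 * (k / 3) + (w i - 2 * (k / 3)) := by
  have hC : Nat.card {a : Fin (r + 1) × Fin (k / 3) //
      (Sum.inl a : GadgetV r k w) ∈ GadgetM r k w i} = 2 * (k / 3) := by
    rw [Nat.card_congr (Equiv.subtypeEquivRight (q := (· ∈ ({i.castSucc, i.succ} : Set _) ×ˢ
        (Set.univ : Set (Fin (k / 3))))) fun ⟨_, _⟩ => by simp),
      Nat.card_coe_set_eq, Set.ncard_prod, Set.ncard_pair (by simp [Fin.ext_iff]),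
      Set.ncard_univ, Nat.card_fin]
  have hP : Nat.card {x : Σ j : Fin r, Fin (w j - 2 * (k / 3)) //
      (Sum.inr x : GadgetV r k w) ∈ GadgetM r k w i} = w i - 2 * (k / 3) :=
    (Nat.card_congr (Equiv.sigmaSubtype i)).trans (Nat.card_fin _)
  exact (Nat.card_congr Equiv.subtypeSum).trans (Nat.card_sum.trans (congrArg₂ (· + ·) hC hP))

end Gadget

theorem gadget_maximal_cliques_general (k r : ℕ) (hr : 0 < r) (w : Fin r → ℕ)
    (hlb : ∀ i, (2 * k + 2) / 3 < w i) :
    (∀ S : Set (GadgetV r k w),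
      ((GadgetG r k w).IsClique S ∧
          ∀ S', (GadgetG r k w).IsClique S' → S ⊆ S' → S' = S) ↔
        ∃ i, S = GadgetM r k w i) ∧
    (∀ i, Nat.card (GadgetM r k w i) = w i) := by
  have hpend : ∀ i, 2 * (k / 3) < w i := fun i => by have := hlb i; omega
  refine ⟨fun S => ⟨?_, ?_⟩, fun i => by have := hpend i; rw [card_gadgetM]; omega⟩
  · rintro ⟨hS, hmax⟩
    obtain rfl | hne := S.eq_empty_or_nonempty
    · have h := hmax _ (gadgetM_isClique ⟨0, hr⟩) (Set.empty_subset _)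
      exact absurd (h ▸ pendant_mem_gadgetM (hpend _)) (Set.notMem_empty _)
    obtain ⟨i, hi⟩ := exists_subset_gadgetM_of_isClique hr hS hne
    exact ⟨i, (hmax _ (gadgetM_isClique i) hi).symm⟩
  · rintro ⟨i, rfl⟩
    refine ⟨gadgetM_isClique i, fun S' hS' hsub => ?_⟩
    obtain ⟨j, hj⟩ :=
      exists_subset_gadgetM_of_isClique hr hS' ⟨_, hsub (pendant_mem_gadgetM (hpend i))⟩
    obtain rfl := eq_of_gadgetM_subset (hpend i) (hsub.trans hj)
    exact hj.antisymm hsub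

/-- For `k ≥ 3` and a palindrome `w` with `⌈2k/3⌉ < w i ≤ k`, the maximal cliques of the
gadget graph are exactly the sets `M_i = C_{i-1} ∪ C_i ∪ C^p_i`, and `|M_i| = w i`. -/
theorem gadget_maximal_cliques (k r : ℕ) (hk : 3 ≤ k) (hr : 0 < r) (w : Fin r → ℕ)
    (hpal : ∀ i : Fin r, w i = w i.rev)
    (hlb : ∀ i, (2 * k + 2) / 3 < w i) (hub : ∀ i, w i ≤ k) :
    (∀ S : Set (GadgetV r k w),
      ((GadgetG r k w).IsClique S ∧
          ∀ S', (GadgetG r k w).IsClique S' → S ⊆ S' → S' = S) ↔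
        ∃ i, S = GadgetM r k w i) ∧
    (∀ i, Nat.card (GadgetM r k w i) = w i) :=
  gadget_maximal_cliques_general k r hr w hlb
end

section
/- Let (X,W) be a good pair with W nonempty, and let (X_1,...,X_s,X) be a minimum size path decomposition of G[X ∪ W] of width at most k with last bag X. Then X_s ≠ X, every vertex of X \ X_s appears only in the last bag, and W ∩ N(X \ X_s) = ∅. -/
variable {V : Type*}

/-- If `(X_1, …, X_s, X)` is a minimum size path decomposition of `G[X ∪ W]` of width at most
`k` with last bag `X`, where `(X, W)` is a good pair with `W` nonempty, then `X_s ≠ X`, every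
vertex of `X \ X_s` appears only in the last bag, and `W ∩ N(X \ X_s) = ∅`. -/
theorem last_bag_of_minimum_path_decomposition [DecidableEq V] (G : SimpleGraph V) (k : ℕ)
    (X W : Finset V) (hgp : GoodPair G k X W) (hW : W ≠ ∅)
    {s : ℕ} (bags : Fin (s + 2) → Finset V)
    (hpd : IsPathDecomp G ↑(X ∪ W) bags)
    (hwidth : ∀ i, (bags i).card ≤ k + 1)
    (hlast : bags (Fin.last (s + 1)) = X)
    (hmin : ∀ (s' : ℕ) (bags' : Fin s' → Finset V),
      IsPathDecomp G ↑(X ∪ W) bags' → (∀ i, (bags' i).card ≤ k + 1) →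
      (∃ h : 0 < s', bags' ⟨s' - 1, Nat.sub_lt h Nat.one_pos⟩ = X) → s + 2 ≤ s') :
    bags ⟨s, by omega⟩ ≠ X ∧
    (∀ v ∈ X \ bags ⟨s, by omega⟩, ∀ i : Fin (s + 2), v ∈ bags i → i = Fin.last (s + 1)) ∧
    (↑W : Set V) ∩ neighborhood G ↑(X \ bags ⟨s, by omega⟩) = ∅ := by
  obtain ⟨hcard, hdisj, hgood⟩ := hgp
  obtain ⟨hsub, hvert, hedge, hint⟩ := hpd
  have hmid : bags ⟨s, by omega⟩ ≠ X := by
    intro heq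
    have key := hmin (s + 1) (fun i => bags i.castSucc) ?_ ?_ ?_
    · omega
    · refine ⟨fun i => hsub _, ?_, ?_, ?_⟩
      · intro v hv
        obtain ⟨i, hi⟩ := hvert v hv
        by_cases h : i.val < s + 1
        · exact ⟨⟨i.val, h⟩, by simpa using hi⟩
        · have hi' : i = Fin.last (s + 1) := by
            apply Fin.ext; have := i.isLt; simp; omega
          refine ⟨⟨s, by omega⟩, ?_⟩
          show v ∈ bags ⟨s, by omega⟩
          rw [heq, ← hlast, ← hi']; exact hi
      · intro v hv w hw hadj
        obtain ⟨i, hvi, hwi⟩ := hedge v hv w hw hadj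
        by_cases h : i.val < s + 1
        · exact ⟨⟨i.val, h⟩, by simpa using hvi, by simpa using hwi⟩
        · have hi' : i = Fin.last (s + 1) := by
            apply Fin.ext; have := i.isLt; simp; omega
          refine ⟨⟨s, by omega⟩, ?_, ?_⟩ <;>
            · show _ ∈ bags ⟨s, by omega⟩
              rw [heq, ← hlast, ← hi']
              first | exact hvi | exact hwi
      · intro v i j l hij hjl h1 h2
        exact hint v i.castSucc j.castSucc l.castSucc
          (by simpa using hij) (by simpa using hjl) h1 h2
    · intro i; exact hwidth _
    · exact ⟨by omega, heq⟩
  have honly : ∀ v ∈ X \ bags ⟨s, by omega⟩, ∀ i : Fin (s + 2), v ∈ bags i →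
      i = Fin.last (s + 1) := by
    intro v hv i hvi
    by_contra hne
    have hile : i.val ≤ s := by
      have h1 := i.isLt
      have h2 : i.val ≠ s + 1 := fun h => hne (Fin.ext (by simpa using h))
      omega
    obtain ⟨hvX, hvB⟩ := Finset.mem_sdiff.mp hv
    have hvlast : v ∈ bags (Fin.last (s + 1)) := hlast ▸ hvX
    exact hvB (hint v i ⟨s, by omega⟩ (Fin.last (s + 1))
      (by simp [Fin.le_def]; omega) (by simp [Fin.le_def]) hvi hvlast)
  refine ⟨hmid, honly, ?_⟩
  ext w
  simp only [Set.mem_inter_iff, Set.mem_empty_iff_false, iff_false, not_and]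
  intro hwW hwN
  obtain ⟨hwnot, u, hu, hadj⟩ := hwN
  have hu' : u ∈ X \ bags ⟨s, by omega⟩ := by simpa using hu
  have huS : u ∈ (↑(X ∪ W) : Set V) := by
    simp [Finset.mem_sdiff.mp hu' |>.1]
  have hwS : w ∈ (↑(X ∪ W) : Set V) := by simpa using Or.inr (by simpa using hwW)
  obtain ⟨i, hui, hwi⟩ := hedge u huS w hwS hadj
  have hilast := honly u hu' i hui
  rw [hilast, hlast] at hwi
  exact Finset.disjoint_left.mp hdisj hwi (by simpa using hwW)
end
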